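/- As k → 1⁻, K(k) ~ log(4/k'), i.e. the quotient K(k)/log(4/k') tends to 1 as k → 1⁻, where k' = √(1−k²). -/

import Mathlib

open Real

/-- Complete elliptic integral of the first kind. -/
noncomputable def EllK (k : ℝ) : ℝ :=
  ∫ θ in (0:ℝ)..(π/2), 1 / Real.sqrt (1 - k^2 * Real.sin θ ^ 2)

/-- Complete elliptic integral of the second kind. -/
noncomputable def EllE (k : ℝ) : ℝ :=
  ∫ θ in (0:ℝ)..(π/2), Real.sqrt (1 - k^2 * Real.sin θ ^ 2)

/-- Complementary complete elliptic integral `K'(k) = K(√(1-k²))`. -/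
noncomputable def EllK' (k : ℝ) : ℝ := EllK (Real.sqrt (1 - k^2))

/-- Complementary elliptic integral of the second kind `E'(k) = E(√(1-k²))`. -/
noncomputable def EllE' (k : ℝ) : ℝ := EllE (Real.sqrt (1 - k^2))

/-- The nome `q = exp(-π K'(k)/K(k))`. -/
noncomputable def nome (k : ℝ) : ℝ := Real.exp (-π * EllK' k / EllK k)

/-- Jacobi's theta function `Θ(u,k) = 1 + 2 ∑_{n≥1} (-1)^n q^{n²} cos(nπu/K)`. -/
noncomputable def JTheta (u k : ℝ) : ℝ :=
  1 + 2 * ∑' n : ℕ, (-1 : ℝ)^(n+1) * nome k ^ ((n+1)^2) *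
    Real.cos (((n:ℝ)+1) * π * u / EllK k)

/-- Jacobi's theta function `H(u,k) = 2 ∑_{n≥0} (-1)^n q^{(n+1/2)²} sin((2n+1)πu/(2K))`. -/
noncomputable def JH (u k : ℝ) : ℝ :=
  2 * ∑' n : ℕ, (-1 : ℝ)^n * nome k ^ ((((n:ℝ) + 1/2)^2)) *
    Real.sin ((2*(n:ℝ)+1) * π * u / (2 * EllK k))

/-- Jacobi's theta function `H₁(u,k) = 2 ∑_{n≥0} q^{(n+1/2)²} cos((2n+1)πu/(2K))`. -/
noncomputable def JH1 (u k : ℝ) : ℝ :=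
  2 * ∑' n : ℕ, nome k ^ ((((n:ℝ) + 1/2)^2)) *
    Real.cos ((2*(n:ℝ)+1) * π * u / (2 * EllK k))

/-- Jacobi's theta function `Θ₁(u,k) = 1 + 2 ∑_{n≥1} q^{n²} cos(nπu/K)`. -/
noncomputable def JTheta1 (u k : ℝ) : ℝ :=
  1 + 2 * ∑' n : ℕ, nome k ^ ((n+1)^2) * Real.cos (((n:ℝ)+1) * π * u / EllK k)

/-- Jacobi's zeta function `zn(u,k) = Θ_u(u,k)/Θ(u,k)`. -/
noncomputable def zn (u k : ℝ) : ℝ := deriv (fun v => JTheta v k) u / JTheta u k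

/-- Jacobi's elliptic sine `sn(u,k) = H(u,k)/(√k Θ(u,k))`. -/
noncomputable def sn (u k : ℝ) : ℝ := JH u k / (Real.sqrt k * JTheta u k)

/-- Jacobi's elliptic cosine `cn(u,k) = √(k'/k) H₁(u,k)/Θ(u,k)`. -/
noncomputable def cn (u k : ℝ) : ℝ :=
  Real.sqrt (Real.sqrt (1 - k^2) / k) * JH1 u k / JTheta u k

/-- Jacobi's delta amplitude `dn(u,k) = √(k') Θ₁(u,k)/Θ(u,k)`. -/
noncomputable def dn (u k : ℝ) : ℝ :=
  Real.sqrt (Real.sqrt (1 - k^2)) * JTheta1 u k / JTheta u k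

/-! On `[0, π/2]` the integrand `1/√(1 - k² sin² θ)` of `K` lies between `sin θ/√(1 - k² sin² θ)`
and that plus `cos θ / k`, because `√(1 - k² sin² θ) ≥ k cos θ`. The lower function has the primitive
`-arsinh (k cos θ / k') / k`, and `arsinh (k / k') = log ((1 + k) / k')`, so
`log (4/k') - log (4/(1+k)) ≤ k K(k) ≤ log (4/k') - log (4/(1+k)) + 1`, while `log (4/k') → ∞`. -/

open Filter Topology

section EllipticBounds

variable {k : ℝ}

lemma hasDerivAt_neg_arsinh_cos_div (hk : k ≠ 0) (hk1 : k ^ 2 < 1) (θ : ℝ) :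
    HasDerivAt (fun θ => -arsinh (k * cos θ / √(1 - k ^ 2)) / k)
      (sin θ / √(1 - k ^ 2 * sin θ ^ 2)) θ := by
  have hc : 0 < √(1 - k ^ 2) := Real.sqrt_pos.2 (by linarith)
  have hc2 : √(1 - k ^ 2) ^ 2 = 1 - k ^ 2 := Real.sq_sqrt (by linarith)
  generalize √(1 - k ^ 2) = c at hc hc2 ⊢
  have hD : 0 < 1 - k ^ 2 * sin θ ^ 2 := by nlinarith [sin_sq_le_one θ]
  have hsq : √(1 + (k * cos θ / c) ^ 2) = √(1 - k ^ 2 * sin θ ^ 2) / c := by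
    have h : 1 + (k * cos θ / c) ^ 2 = (√(1 - k ^ 2 * sin θ ^ 2) / c) ^ 2 := by
      rw [div_pow, div_pow, Real.sq_sqrt hD.le]
      field_simp
      nlinarith [sin_sq_add_cos_sq θ]
    rw [h, Real.sqrt_sq (by positivity)]
  refine (((Real.hasDerivAt_arsinh _).comp θ
    (((hasDerivAt_cos θ).const_mul k).div_const c)).neg.div_const k).congr_deriv ?_
  rw [hsq]
  field_simp

lemma one_sub_sq_mul_sin_sq_pos (hk1 : k ^ 2 < 1) (θ : ℝ) : 0 < 1 - k ^ 2 * sin θ ^ 2 := by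
  nlinarith [sin_sq_le_one θ]

lemma continuous_div_sqrt_one_sub_sq_mul_sin_sq {g : ℝ → ℝ} (hg : Continuous g)
    (hk1 : k ^ 2 < 1) : Continuous fun θ => g θ / √(1 - k ^ 2 * sin θ ^ 2) :=
  hg.div (by fun_prop) fun θ => (Real.sqrt_pos.2 (one_sub_sq_mul_sin_sq_pos hk1 θ)).ne'

lemma integral_sin_div_sqrt_one_sub_sq_mul_sin_sq (hk : k ≠ 0) (hk1 : k ^ 2 < 1) :
    ∫ θ in (0 : ℝ)..(π / 2), sin θ / √(1 - k ^ 2 * sin θ ^ 2)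
      = arsinh (k / √(1 - k ^ 2)) / k := by
  rw [intervalIntegral.integral_eq_sub_of_hasDerivAt
    (fun θ _ => hasDerivAt_neg_arsinh_cos_div hk hk1 θ)
    ((continuous_div_sqrt_one_sub_sq_mul_sin_sq continuous_sin hk1).intervalIntegrable _ _)]
  simp [neg_div]

lemma arsinh_div_le_ellK (hk : k ≠ 0) (hk1 : k ^ 2 < 1) :
    arsinh (k / √(1 - k ^ 2)) / k ≤ EllK k := by
  rw [← integral_sin_div_sqrt_one_sub_sq_mul_sin_sq hk hk1, EllK]
  refine intervalIntegral.integral_mono_on (by positivity)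
    ((continuous_div_sqrt_one_sub_sq_mul_sin_sq continuous_sin hk1).intervalIntegrable _ _)
    ((continuous_div_sqrt_one_sub_sq_mul_sin_sq continuous_const hk1).intervalIntegrable _ _)
    fun θ _ => ?_
  gcongr
  exact sin_le_one θ

lemma one_div_sqrt_le_sin_div_sqrt_add_cos_div (hk : 0 < k) (hk1 : k ^ 2 < 1) {θ : ℝ}
    (hθ : θ ∈ Set.Icc 0 (π / 2)) :
    1 / √(1 - k ^ 2 * sin θ ^ 2) ≤ sin θ / √(1 - k ^ 2 * sin θ ^ 2) + cos θ / k := by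
  have hD := Real.sqrt_pos.2 (one_sub_sq_mul_sin_sq_pos hk1 θ)
  have hsin : 0 ≤ sin θ := sin_nonneg_of_nonneg_of_le_pi hθ.1 (by linarith [hθ.2, pi_pos])
  have hcos : 0 ≤ cos θ := cos_nonneg_of_mem_Icc ⟨by linarith [hθ.1, pi_pos], hθ.2⟩
  have hkcos : k * cos θ ≤ √(1 - k ^ 2 * sin θ ^ 2) := by
    rw [Real.le_sqrt (by positivity) (one_sub_sq_mul_sin_sq_pos hk1 θ).le]
    nlinarith [sin_sq_add_cos_sq θ]
  have hrest : (1 - sin θ) / √(1 - k ^ 2 * sin θ ^ 2) ≤ cos θ / k := by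
    rw [div_le_div_iff₀ hD hk]
    -- `(1 - sin θ) k ≤ k cos² θ ≤ cos θ · √(1 - k² sin² θ)`
    nlinarith [sin_le_one θ, sin_sq_add_cos_sq θ, mul_le_mul_of_nonneg_left hkcos hcos,
      mul_nonneg hk.le (mul_nonneg hsin (sub_nonneg.2 (sin_le_one θ)))]
  calc 1 / √(1 - k ^ 2 * sin θ ^ 2)
      = sin θ / √(1 - k ^ 2 * sin θ ^ 2) + (1 - sin θ) / √(1 - k ^ 2 * sin θ ^ 2) := by ring
    _ ≤ _ := by gcongr

lemma ellK_le_arsinh_div_add_inv (hk : 0 < k) (hk1 : k ^ 2 < 1) :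
    EllK k ≤ arsinh (k / √(1 - k ^ 2)) / k + 1 / k := by
  have hsin := continuous_div_sqrt_one_sub_sq_mul_sin_sq continuous_sin hk1
  have hcos : Continuous fun θ => cos θ / k := by fun_prop
  calc EllK k ≤ ∫ θ in (0 : ℝ)..(π / 2), (sin θ / √(1 - k ^ 2 * sin θ ^ 2) + cos θ / k) :=
        intervalIntegral.integral_mono_on (by positivity)
          ((continuous_div_sqrt_one_sub_sq_mul_sin_sq continuous_const hk1).intervalIntegrable _ _)
          ((hsin.add hcos).intervalIntegrable _ _)
          fun θ hθ => one_div_sqrt_le_sin_div_sqrt_add_cos_div hk hk1 hθ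
    _ = arsinh (k / √(1 - k ^ 2)) / k + 1 / k := by
        rw [intervalIntegral.integral_add (hsin.intervalIntegrable _ _)
          (hcos.intervalIntegrable _ _), integral_sin_div_sqrt_one_sub_sq_mul_sin_sq hk.ne' hk1,
          intervalIntegral.integral_div, integral_cos]
        simp

lemma arsinh_div_sqrt_one_sub_sq_eq_log_sub_log (hk1 : k ^ 2 < 1) :
    arsinh (k / √(1 - k ^ 2)) = log (4 / √(1 - k ^ 2)) - log (4 / (1 + k)) := by
  have hc : 0 < √(1 - k ^ 2) := Real.sqrt_pos.2 (by linarith)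
  have hc2 : √(1 - k ^ 2) ^ 2 = 1 - k ^ 2 := Real.sq_sqrt (by linarith)
  have h : 1 + (k / √(1 - k ^ 2)) ^ 2 = (1 / √(1 - k ^ 2)) ^ 2 := by
    field_simp
    linarith
  rw [arsinh, h, Real.sqrt_sq (by positivity), ←
    Real.log_div (by positivity) (div_pos four_pos (by nlinarith)).ne']
  congr 1
  field_simp
  ring

lemma log_sub_log_div_le_ellK (hk0 : 0 < k) (hk1 : k < 1) :
    (log (4 / √(1 - k ^ 2)) - log (4 / (1 + k))) / k ≤ EllK k := by
  have hk1' : k ^ 2 < 1 := by nlinarith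
  rw [← arsinh_div_sqrt_one_sub_sq_eq_log_sub_log hk1']
  exact arsinh_div_le_ellK hk0.ne' hk1'

lemma ellK_le_log_add_sub_log_div (hk0 : 0 < k) (hk1 : k < 1) :
    EllK k ≤ (log (4 / √(1 - k ^ 2)) + (1 - log (4 / (1 + k)))) / k := by
  have hk1' : k ^ 2 < 1 := by nlinarith
  have h := ellK_le_arsinh_div_add_inv hk0 hk1'
  rw [arsinh_div_sqrt_one_sub_sq_eq_log_sub_log hk1'] at h
  exact h.trans_eq (by ring)

end EllipticBounds

lemma tendsto_add_div_div_self {α : Type*} {l : Filter α} {L f m : α → ℝ} {a : ℝ}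
    (hL : Tendsto L l atTop) (hf : Tendsto f l (𝓝 a)) (hm : Tendsto m l (𝓝 1)) :
    Tendsto (fun x => (L x + f x) / m x / L x) l (𝓝 1) := by
  have h : Tendsto (fun x => (1 + f x / L x) / m x) l (𝓝 ((1 + 0) / 1)) :=
    ((tendsto_const_nhds.add (hf.div_atTop hL)).div hm one_ne_zero)
  rw [add_zero, div_one] at h
  refine h.congr' ?_
  filter_upwards [hL.eventually_ne_atTop 0] with x hx
  field_simp

lemma tendsto_log_four_div_sqrt_one_sub_sq :
    Tendsto (fun k : ℝ => log (4 / √(1 - k ^ 2))) (𝓝[<] 1) atTop := by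
  have hsqrt : Tendsto (fun k : ℝ => √(1 - k ^ 2)) (𝓝[<] 1) (𝓝[>] 0) := by
    refine tendsto_nhdsWithin_iff.2 ⟨?_, ?_⟩
    · have h : Tendsto (fun k : ℝ => √(1 - k ^ 2)) (𝓝 1) (𝓝 √(1 - 1 ^ 2)) :=
        ((continuous_const.sub (continuous_pow 2)).sqrt).tendsto 1
      norm_num at h
      exact h.mono_left nhdsWithin_le_nhds
    · filter_upwards [Ioo_mem_nhdsLT (show (0 : ℝ) < 1 from one_pos)] with k hk
      exact Real.sqrt_pos.2 (by nlinarith [hk.1, hk.2])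
  exact tendsto_log_atTop.comp (hsqrt.inv_tendsto_nhdsGT_zero.const_mul_atTop four_pos)

theorem stmt_9 :
    Filter.Tendsto (fun k : ℝ => EllK k / Real.log (4 / Real.sqrt (1 - k^2)))
      (nhdsWithin 1 (Set.Iio (1:ℝ))) (nhds 1) := by
  have hL := tendsto_log_four_div_sqrt_one_sub_sq
  have hg : Tendsto (fun k : ℝ => log (4 / (1 + k))) (𝓝[<] 1) (𝓝 (log (4 / (1 + 1)))) :=
    ((tendsto_const_nhds.div (tendsto_const_nhds.add tendsto_id) (by norm_num)).log
      (by norm_num)).mono_left nhdsWithin_le_nhds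
  have hk : Tendsto (fun k : ℝ => k) (𝓝[<] 1) (𝓝 1) := nhdsWithin_le_nhds
  refine tendsto_of_tendsto_of_tendsto_of_le_of_le'
    (tendsto_add_div_div_self hL hg.neg hk) (tendsto_add_div_div_self hL (hg.const_sub 1) hk)
    ?_ ?_ <;>
  filter_upwards [Ioo_mem_nhdsLT (show (0 : ℝ) < 1 from one_pos), hL.eventually_gt_atTop 0]
    with k ⟨hk0, hk1⟩ hLpos <;>
  gcongr
  · simpa only [sub_eq_add_neg] using log_sub_log_div_le_ellK hk0 hk1
  · exact ellK_le_log_add_sub_log_div hk0 hk1
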